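/- arXiv:cond-mat/0506525 — 7 statements merged into one kernel-verified Lean document; each statement's English description precedes it below -/
import Mathlib

section
/- With $F_{k,l}(x,t)$ as defined via the contour integral, for integers $x_1\le x_2$ one has the telescoping summation identity $\sum_{x=x_1}^{x_2} v_l^{\,x}\,F_{k,l}(x,t)= v_l^{\,x_1}F_{k,l+1}(x_1,t)-v_l^{\,x_2+1}F_{k,l+1}(x_2+1,t)$. -/
/-! Multiplying the integrand of `F_{k,l+1}` by `1 - v_l z` gives that of `F_{k,l}`, and
multiplying it by `z` raises `x` by one. Hence
`v_l^x F_{k,l}(x) = v_l^x F_{k,l+1}(x) - v_l^{x+1} F_{k,l+1}(x+1)`, and the sum telescopes. -/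

open Finset

/-- The contour-integral function `F_{k,l}(x,t)` of Rákos–Schütz:
`F_{k,l}(x,t) = (2πi)⁻¹ ∮ e^{t/z} z^{x-1} ∏_{i=1}^{l-1}(1 - v_i z)⁻¹ ∏_{i=1}^{k-1}(1 - v_i z) dz`
along a circle of radius `ε` around the origin.  The rates are `v 1, v 2, …`. -/
noncomputable def F (v : ℕ → ℝ) (ε : ℝ) (k l : ℕ) (x : ℤ) (t : ℝ) : ℂ :=
  (2 * Real.pi * Complex.I)⁻¹ *
    (∮ z in C(0, ε), Complex.exp ((t : ℂ) / z) * z ^ (x - 1) *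
      (∏ i ∈ range (l - 1), (1 - (v (i + 1) : ℂ) * z)⁻¹) *
      ∏ i ∈ range (k - 1), (1 - (v (i + 1) : ℂ) * z))

open Complex Metric

lemma Finset.sum_Icc_int_sub {M : Type*} [AddCommGroup M] (f : ℤ → M) {a b : ℤ} (hab : a ≤ b) :
    ∑ n ∈ Icc a b, (f n - f (n + 1)) = f a - f (b + 1) := by
  induction b, hab using Int.leInduction with
  | base => simp
  | succ b hab ih =>
    rw [← insert_Icc_right_eq_Icc_add_one (by omega), sum_insert (by simp), ih]
    abel

lemma one_sub_mul_ne_zero_of_mem_sphere {c z : ℂ} {ε : ℝ} (hz : z ∈ sphere (0 : ℂ) ε)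
    (hc : ‖c‖ * ε < 1) : 1 - c * z ≠ 0 := by
  rw [sub_ne_zero]
  intro h
  rw [mem_sphere_zero_iff_norm] at hz
  have : ‖c * z‖ = 1 := by rw [← h, norm_one]
  rw [norm_mul, hz] at this
  exact hc.ne this

noncomputable def contourIntegrand (v : ℕ → ℝ) (k l : ℕ) (x : ℤ) (t : ℝ) (z : ℂ) : ℂ :=
  exp ((t : ℂ) / z) * z ^ (x - 1) *
    (∏ i ∈ range (l - 1), (1 - (v (i + 1) : ℂ) * z)⁻¹) *
    ∏ i ∈ range (k - 1), (1 - (v (i + 1) : ℂ) * z)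

section contourIntegrand

variable {v : ℕ → ℝ} {k l : ℕ} {x : ℤ} {t : ℝ} {z : ℂ}

lemma F_eq_circleIntegral (ε : ℝ) :
    F v ε k l x t = (2 * Real.pi * I)⁻¹ * ∮ z in C(0, ε), contourIntegrand v k l x t z :=
  rfl

lemma contourIntegrand_succ (hl : 1 ≤ l) :
    contourIntegrand v k (l + 1) x t z = contourIntegrand v k l x t z * (1 - v l * z)⁻¹ := by
  obtain ⟨m, rfl⟩ := Nat.exists_eq_add_of_le' hl
  simp only [contourIntegrand, Nat.add_sub_cancel, prod_range_succ]
  ring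

lemma contourIntegrand_add_one (hz : z ≠ 0) :
    contourIntegrand v k l (x + 1) t z = contourIntegrand v k l x t z * z := by
  rw [contourIntegrand, contourIntegrand, add_sub_cancel_right, zpow_sub_one₀ hz x]
  field_simp

lemma contourIntegrand_eq_sub (hl : 1 ≤ l) (hz : z ≠ 0) (hvz : 1 - v l * z ≠ 0) :
    contourIntegrand v k l x t z =
      contourIntegrand v k (l + 1) x t z - v l * contourIntegrand v k (l + 1) (x + 1) t z := by
  rw [contourIntegrand_succ hl, contourIntegrand_succ hl, contourIntegrand_add_one hz]
  field_simp

lemma continuousOn_contourIntegrand {s : Set ℂ} (hs : ∀ z ∈ s, z ≠ 0)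
    (hv : ∀ z ∈ s, ∀ i, 1 - (v i : ℂ) * z ≠ 0) :
    ContinuousOn (contourIntegrand v k l x t) s := by
  have hinv : ContinuousOn (fun z : ℂ => t / z) s := continuousOn_const.div continuousOn_id hs
  exact ((continuous_exp.comp_continuousOn hinv).mul (continuousOn_id.zpow₀ _ fun z hz =>
    Or.inl (hs z hz))).mul (continuousOn_finsetProd _ fun i _ =>
      (by fun_prop : Continuous fun z : ℂ => 1 - (v (i + 1) : ℂ) * z).continuousOn.inv₀
        fun z hz => hv z hz _) |>.mul (by fun_prop)

end contourIntegrand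

theorem F_eq_sub {v : ℕ → ℝ} {ε : ℝ} (hε : 0 < ε) (hv : ∀ i, |v i| * ε < 1) (k : ℕ) {l : ℕ}
    (hl : 1 ≤ l) (x : ℤ) (t : ℝ) :
    F v ε k l x t = F v ε k (l + 1) x t - v l * F v ε k (l + 1) (x + 1) t := by
  have h0 (z) (hz : z ∈ sphere (0 : ℂ) ε) : z ≠ 0 := ne_of_mem_sphere hz hε.ne'
  have hne (z) (hz : z ∈ sphere (0 : ℂ) ε) (i : ℕ) : 1 - (v i : ℂ) * z ≠ 0 :=
    one_sub_mul_ne_zero_of_mem_sphere hz (by simpa using hv i)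
  have hint (l : ℕ) (x : ℤ) : CircleIntegrable (contourIntegrand v k l x t) 0 ε :=
    (continuousOn_contourIntegrand h0 hne).circleIntegrable hε.le
  have hint' : CircleIntegrable (fun z => v l * contourIntegrand v k (l + 1) (x + 1) t z) 0 ε :=
    (hint _ _).const_smul
  simp only [F_eq_circleIntegral]
  rw [circleIntegral.integral_congr hε.le fun z hz =>
      contourIntegrand_eq_sub hl (h0 z hz) (hne z hz l),
    circleIntegral.integral_sub (hint _ _) hint', circleIntegral.integral_const_mul]
  ring

theorem telescoping_sum_column_general
    (v : ℕ → ℝ) (vmax : ℝ) (hv : ∀ i, 0 < v i) (hvm : ∀ i, v i ≤ vmax)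
    (ε : ℝ) (hε : 0 < ε) (hεm : ε < 1 / vmax)
    (t : ℝ) (k l : ℕ) (hl : 1 ≤ l)
    (x₁ x₂ : ℤ) (hx : x₁ ≤ x₂) :
    ∑ x ∈ Finset.Icc x₁ x₂, (v l : ℂ) ^ x * F v ε k l x t =
      (v l : ℂ) ^ x₁ * F v ε k (l + 1) x₁ t -
        (v l : ℂ) ^ (x₂ + 1) * F v ε k (l + 1) (x₂ + 1) t := by
  have hvε (i : ℕ) : |v i| * ε < 1 := by
    have hvmax : 0 < vmax := (hv i).trans_le (hvm i)
    rw [abs_of_pos (hv i)]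
    calc v i * ε ≤ vmax * ε := by gcongr; exact hvm i
      _ < 1 := by rwa [lt_div_iff₀ hvmax, mul_comm] at hεm
  have hvl : (v l : ℂ) ≠ 0 := ofReal_ne_zero.2 (hv l).ne'
  have step (x : ℤ) : (v l : ℂ) ^ x * F v ε k l x t =
      (v l : ℂ) ^ x * F v ε k (l + 1) x t - (v l : ℂ) ^ (x + 1) * F v ε k (l + 1) (x + 1) t := by
    rw [F_eq_sub hε hvε k hl x t, zpow_add_one₀ hvl]
    ring
  rw [sum_congr rfl fun x _ => step x]
  exact sum_Icc_int_sub (fun x => (v l : ℂ) ^ x * F v ε k (l + 1) x t) hx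

theorem telescoping_sum_column
    (v : ℕ → ℝ) (vmax : ℝ) (hv : ∀ i, 0 < v i) (hvm : ∀ i, v i ≤ vmax)
    (ε : ℝ) (hε : 0 < ε) (hεm : ε < 1 / vmax)
    (t : ℝ) (ht : 0 ≤ t) (k l : ℕ) (hk : 1 ≤ k) (hl : 1 ≤ l)
    (x₁ x₂ : ℤ) (hx : x₁ ≤ x₂) :
    ∑ x ∈ Finset.Icc x₁ x₂, (v l : ℂ) ^ x * F v ε k l x t =
      (v l : ℂ) ^ x₁ * F v ε k (l + 1) x₁ t -
        (v l : ℂ) ^ (x₂ + 1) * F v ε k (l + 1) (x₂ + 1) t :=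
  telescoping_sum_column_general v vmax hv hvm ε hε hεm t k l hl x₁ x₂ hx
end

section
/- With $F_{k,l}(x,t)$ as defined via the contour integral, for integers $x_1\le x_2$ and $k\ge 2$ one has $\sum_{x=x_1}^{x_2} v_{k-1}^{\,x}\,F_{k,l}(x,t)= v_{k-1}^{\,x_1}F_{k-1,l}(x_1,t)-v_{k-1}^{\,x_2+1}F_{k-1,l}(x_2+1,t)$. -/
open Finset

/-! The integrand of `F_{k+1,l}` is that of `F_{k,l}` times `1 - v_k z`, and the factor `z` shifts
`z^{x-1}` to `z^x`; so `F_{k+1,l}(x) = F_{k,l}(x) - v_k F_{k,l}(x+1)` by linearity of the contour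
integral, which needs only that no pole `1/v_i` lies on the circle. After weighting by `v_k^x`
the right-hand side is a difference `g(x) - g(x+1)`, and the sum over `x` telescopes. -/

theorem Int.sum_Icc_sub_add_one {M : Type*} [AddCommGroup M] (f : ℤ → M) {a b : ℤ}
    (hab : a ≤ b) : ∑ x ∈ Icc a b, (f x - f (x + 1)) = f a - f (b + 1) := by
  induction b, hab using Int.leInduction with
  | base => simp
  | succ n hn ih =>
    rw [← insert_Icc_right_eq_Icc_add_one (by omega), sum_insert (by simp), ih]
    abel

theorem one_sub_mul_ne_zero_of_norm_mul_norm_lt_one {R : Type*} [NormedRing R] [NormOneClass R]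
    {a z : R} (h : ‖a‖ * ‖z‖ < 1) : 1 - a * z ≠ 0 := by
  rw [sub_ne_zero]
  rintro hone
  have := (norm_mul_le a z).trans_lt h
  rw [← hone, norm_one] at this
  exact lt_irrefl 1 this

noncomputable def FIntegrand (v : ℕ → ℝ) (k l : ℕ) (x : ℤ) (t : ℝ) (z : ℂ) : ℂ :=
  Complex.exp ((t : ℂ) / z) * z ^ (x - 1) *
    (∏ i ∈ range (l - 1), (1 - (v (i + 1) : ℂ) * z)⁻¹) *
    ∏ i ∈ range (k - 1), (1 - (v (i + 1) : ℂ) * z)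

section

variable {v : ℕ → ℝ} {ε : ℝ} {k : ℕ} (l : ℕ) (x : ℤ) (t : ℝ)

theorem F_eq_circleIntegral_FIntegrand :
    F v ε k l x t = (2 * Real.pi * Complex.I)⁻¹ * ∮ z in C(0, ε), FIntegrand v k l x t z :=
  rfl

theorem FIntegrand_succ (hk : 1 ≤ k) {z : ℂ} (hz : z ≠ 0) :
    FIntegrand v (k + 1) l x t z =
      FIntegrand v k l x t z - v k * FIntegrand v k l (x + 1) t z := by
  obtain ⟨m, rfl⟩ : ∃ m, k = m + 1 := ⟨k - 1, by omega⟩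
  have hzpow : z ^ (x + 1 - 1) = z ^ (x - 1) * z := by
    rw [add_sub_right_comm, zpow_add_one₀ hz]
  simp only [FIntegrand, Nat.add_sub_cancel, prod_range_succ, hzpow]
  ring

theorem continuousOn_FIntegrand (hε : 0 < ε) (hvε : ∀ i, |v i| * ε < 1) :
    ContinuousOn (FIntegrand v k l x t) (Metric.sphere 0 ε) := by
  have hz0 : ∀ z ∈ Metric.sphere (0 : ℂ) ε, z ≠ 0 := fun z hz => Metric.ne_of_mem_sphere hz hε.ne'
  have hfactor : ∀ i, ∀ z ∈ Metric.sphere (0 : ℂ) ε, 1 - (v i : ℂ) * z ≠ 0 := fun i z hz =>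
    one_sub_mul_ne_zero_of_norm_mul_norm_lt_one <| by
      rw [Complex.norm_real, Real.norm_eq_abs, mem_sphere_zero_iff_norm.mp hz]
      exact hvε i
  unfold FIntegrand
  refine ((((continuousOn_const.div continuousOn_id hz0).cexp).mul
    (continuousOn_id.zpow₀ _ fun z hz => Or.inl (hz0 z hz))).mul ?_).mul ?_
  · exact continuousOn_finsetProd _ fun i _ =>
      (continuousOn_const.sub (continuousOn_const.mul continuousOn_id)).inv₀ (hfactor (i + 1))
  · exact continuousOn_finsetProd _ fun i _ =>
      continuousOn_const.sub (continuousOn_const.mul continuousOn_id)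

theorem F_succ (hε : 0 < ε) (hvε : ∀ i, |v i| * ε < 1) (hk : 1 ≤ k) :
    F v ε (k + 1) l x t = F v ε k l x t - v k * F v ε k l (x + 1) t := by
  have hint (y : ℤ) : CircleIntegrable (FIntegrand v k l y t) 0 ε :=
    (continuousOn_FIntegrand l y t hε hvε).circleIntegrable hε.le
  simp only [F_eq_circleIntegral_FIntegrand]
  rw [circleIntegral.integral_congr hε.le fun z hz =>
      FIntegrand_succ l x t hk (Metric.ne_of_mem_sphere hz hε.ne'),
    circleIntegral.integral_sub (hint x) (g := fun z => (v k : ℂ) * FIntegrand v k l (x + 1) t z)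
      ((hint (x + 1)).const_smul (a := (v k : ℂ))),
    circleIntegral.integral_const_mul]
  ring

theorem zpow_mul_F_succ (hε : 0 < ε) (hvε : ∀ i, |v i| * ε < 1) (hk : 1 ≤ k) (hvk : v k ≠ 0) :
    (v k : ℂ) ^ x * F v ε (k + 1) l x t =
      (v k : ℂ) ^ x * F v ε k l x t - (v k : ℂ) ^ (x + 1) * F v ε k l (x + 1) t := by
  rw [F_succ l x t hε hvε hk, zpow_add_one₀ (Complex.ofReal_ne_zero.mpr hvk)]
  ring

end

theorem telescoping_sum_row_general
    (v : ℕ → ℝ) (vmax : ℝ) (hv : ∀ i, 0 < v i) (hvm : ∀ i, v i ≤ vmax)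
    (ε : ℝ) (hε : 0 < ε) (hεm : ε < 1 / vmax)
    (t : ℝ) (k l : ℕ) (hk : 2 ≤ k)
    (x₁ x₂ : ℤ) (hx : x₁ ≤ x₂) :
    ∑ x ∈ Finset.Icc x₁ x₂, (v (k - 1) : ℂ) ^ x * F v ε k l x t =
      (v (k - 1) : ℂ) ^ x₁ * F v ε (k - 1) l x₁ t -
        (v (k - 1) : ℂ) ^ (x₂ + 1) * F v ε (k - 1) l (x₂ + 1) t := by
  obtain ⟨k, rfl⟩ : ∃ m, k = m + 1 := ⟨k - 1, by omega⟩
  have hvε : ∀ i, |v i| * ε < 1 := fun i => by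
    have hvmax : 0 < vmax := (hv i).trans_le (hvm i)
    rw [abs_of_pos (hv i)]
    calc v i * ε ≤ vmax * ε := by gcongr; exact hvm i
      _ < 1 := (lt_div_iff₀' hvmax).mp hεm
  simp only [Nat.add_sub_cancel]
  rw [sum_congr rfl fun x _ => zpow_mul_F_succ l x t hε hvε (by omega) (hv k).ne']
  exact Int.sum_Icc_sub_add_one (fun x => (v k : ℂ) ^ x * F v ε k l x t) hx

theorem telescoping_sum_row
    (v : ℕ → ℝ) (vmax : ℝ) (hv : ∀ i, 0 < v i) (hvm : ∀ i, v i ≤ vmax)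
    (ε : ℝ) (hε : 0 < ε) (hεm : ε < 1 / vmax)
    (t : ℝ) (ht : 0 ≤ t) (k l : ℕ) (hk : 2 ≤ k) (hl : 1 ≤ l)
    (x₁ x₂ : ℤ) (hx : x₁ ≤ x₂) :
    ∑ x ∈ Finset.Icc x₁ x₂, (v (k - 1) : ℂ) ^ x * F v ε k l x t =
      (v (k - 1) : ℂ) ^ x₁ * F v ε (k - 1) l x₁ t -
        (v (k - 1) : ℂ) ^ (x₂ + 1) * F v ε (k - 1) l (x₂ + 1) t :=
  telescoping_sum_row_general v vmax hv hvm ε hε hεm t k l hk x₁ x₂ hx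
end

section
/- Let $v_1,\dots,v_N>0$ and let $S_\pi$ be a family of complex numbers indexed by permutations $\pi$ of $\{1,\dots,N\}$ satisfying the Bethe ansatz exchange relation $S_{T_k\pi}=-\frac{1-v_k e^{ik_{\pi(k+1)}}}{1-v_k e^{ik_{\pi(k)}}}S_\pi$ for each adjacent transposition $T_k$ (swapping entries $k$ and $k+1$ of $\pi$), with $S_{\mathrm{id}}$ given, where $k_1,\dots,k_N$ are fixed complex momenta with $1-v_j e^{ik_m}\neq 0$ for all $j,m$. Then for all $(x_1,\dots,x_N)\in\mathbb{Z}^N$, $\sum_{\pi} S_\pi \exp\big(i\sum_{j=1}^N x_j k_{\pi(j)}\big) = S_{\mathrm{id}}\det\Big[\prod_{j=1}^{n-1}(1-v_j e^{ik_m})^{-1}\prod_{j=1}^{m-1}(1-v_j e^{ik_m})\,e^{ik_m x_n}\Big]_{1\le m,n\le N}$. -/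
open Finset Equiv

/-! The exchange relation determines `S_π` from `S_id`, because adjacent transpositions generate
the symmetric group. On the other hand `sign π * ∏ₙ A(n, π n)`, with
`A(n, m) = ∏_{j<m} c(j, m) / ∏_{j<n} c(j, m)`, satisfies it: swapping positions `q, q+1`
changes only two factors, whose ratio is `c(q, π(q+1)) / c(q, π q)`, and `A(n, n) = 1`.
So `S_π = S_id · sign π · ∏ₙ A(n, π n)`, and the Bethe sum is the Leibniz expansion of the
determinant. -/

theorem Equiv.Perm.eq_of_mul_swap_succ {α : Type*} {N : ℕ} {S T : Perm (Fin N) → α}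
    (step : Perm (Fin N) → (q : ℕ) → q + 1 < N → α → α)
    (hS : ∀ π q (hq : q + 1 < N),
      S (π * swap ⟨q, Nat.lt_of_succ_lt hq⟩ ⟨q + 1, hq⟩) = step π q hq (S π))
    (hT : ∀ π q (hq : q + 1 < N),
      T (π * swap ⟨q, Nat.lt_of_succ_lt hq⟩ ⟨q + 1, hq⟩) = step π q hq (T π))
    (h1 : S 1 = T 1) : S = T := by
  funext π
  cases N with
  | zero => rwa [Subsingleton.elim π 1]
  | succ n =>
    induction π using Submonoid.induction_of_closure_eq_top_right
      (Perm.mclosure_swap_castSucc_succ n) with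
    | one => exact h1
    | mul_right π _ hσ ih =>
      obtain ⟨i, rfl⟩ := hσ
      have hq : (i : ℕ) + 1 < n + 1 := Nat.succ_lt_succ i.isLt
      exact ((hS π i hq).trans (congrArg _ ih)).trans (hT π i hq).symm

theorem Finset.prod_apply_mul_swap {ι M : Type*} [Fintype ι] [DecidableEq ι] [CommMonoid M]
    (f : ι → ι → M) (σ : Perm ι) {a b : ι} (hab : a ≠ b) :
    ∏ n, f n ((σ * swap a b) n) = f a (σ b) * f b (σ a) * ∏ n ∈ {a, b}ᶜ, f n (σ n) := by
  rw [← prod_mul_prod_compl {a, b}, prod_pair hab]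
  congr 1
  · simp
  · refine prod_congr rfl fun n hn => ?_
    simp only [mem_compl, mem_insert, mem_singleton, not_or] at hn
    rw [Perm.mul_apply, swap_apply_of_ne_of_ne hn.1 hn.2]

section Bethe

variable {K : Type*} [Field K] (c : ℕ → ℕ → K)

def betheWeight (n m : ℕ) : K := (∏ j ∈ range n, (c j m)⁻¹) * ∏ j ∈ range m, c j m

def betheAmplitude {N : ℕ} (π : Perm (Fin N)) : K :=
  (Perm.sign π : K) * ∏ n : Fin N, betheWeight c n (π n)

variable {c}

theorem betheWeight_succ (n m : ℕ) :
    betheWeight c (n + 1) m = (c n m)⁻¹ * betheWeight c n m := by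
  simp only [betheWeight, prod_range_succ]
  ring

theorem betheWeight_self (hc : ∀ j m, c j m ≠ 0) (n : ℕ) : betheWeight c n n = 1 := by
  rw [betheWeight, prod_inv_distrib, inv_mul_cancel₀ (prod_ne_zero_iff.2 fun j _ => hc j n)]

theorem betheAmplitude_one (hc : ∀ j m, c j m ≠ 0) (N : ℕ) :
    betheAmplitude c (1 : Perm (Fin N)) = 1 := by
  simp [betheAmplitude, betheWeight_self hc]

theorem betheAmplitude_mul_swap (hc : ∀ j m, c j m ≠ 0) {N : ℕ} (π : Perm (Fin N)) (q : ℕ)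
    (hq : q + 1 < N) :
    betheAmplitude c (π * swap ⟨q, Nat.lt_of_succ_lt hq⟩ ⟨q + 1, hq⟩) =
      -(c q (π ⟨q + 1, hq⟩) / c q (π ⟨q, Nat.lt_of_succ_lt hq⟩)) * betheAmplitude c π := by
  set a : Fin N := ⟨q, Nat.lt_of_succ_lt hq⟩
  set b : Fin N := ⟨q + 1, hq⟩
  have hab : a ≠ b := by simp [a, b, Fin.ext_iff]
  rw [betheAmplitude, betheAmplitude, Perm.sign_mul, Perm.sign_swap hab,
    prod_apply_mul_swap (fun n m : Fin N => betheWeight c n m) π hab]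
  conv_rhs => rw [← prod_mul_prod_compl {a, b}, prod_pair hab]
  simp only [a, b, betheWeight_succ]
  have ha := hc q (π ⟨q, Nat.lt_of_succ_lt hq⟩)
  have hb := hc q (π ⟨q + 1, hq⟩)
  push_cast
  field_simp

theorem eq_mul_betheAmplitude (hc : ∀ j m, c j m ≠ 0) {N : ℕ} (S : Perm (Fin N) → K)
    (hS : ∀ (π : Perm (Fin N)) (q : ℕ) (hq : q + 1 < N),
      S (π * swap ⟨q, Nat.lt_of_succ_lt hq⟩ ⟨q + 1, hq⟩) =
        -(c q (π ⟨q + 1, hq⟩) / c q (π ⟨q, Nat.lt_of_succ_lt hq⟩)) * S π)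
    (π : Perm (Fin N)) : S π = S 1 * betheAmplitude c π := by
  refine congrFun (Perm.eq_of_mul_swap_succ (T := fun π => S 1 * betheAmplitude c π) _ hS
    (fun π q hq => ?_) ?_) π
  · rw [betheAmplitude_mul_swap hc]
    ring
  · rw [betheAmplitude_one hc, mul_one]

variable (c)

theorem sum_betheAmplitude_mul_prod_eq_det {N : ℕ} (y : Fin N → Fin N → K) :
    ∑ π : Perm (Fin N), betheAmplitude c π * ∏ j, y (π j) j =
      Matrix.det (Matrix.of fun m n : Fin N => betheWeight c n m * y m n) := by
  simp only [Matrix.det_apply', Matrix.of_apply, prod_mul_distrib, betheAmplitude, mul_assoc]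

end Bethe

theorem bethe_determinant_general (N : ℕ) (v : ℕ → ℝ)
    (z : ℕ → ℂ) (hz : ∀ j m, 1 - (v j : ℂ) * z m ≠ 0)
    (S : Equiv.Perm (Fin N) → ℂ)
    (hS : ∀ (π : Equiv.Perm (Fin N)) (q : ℕ) (hq : q + 1 < N),
      S (π * Equiv.swap ⟨q, Nat.lt_of_succ_lt hq⟩ ⟨q + 1, hq⟩) =
        -((1 - (v (q + 1) : ℂ) * z ((π ⟨q + 1, hq⟩ : ℕ) + 1)) /
          (1 - (v (q + 1) : ℂ) * z ((π ⟨q, Nat.lt_of_succ_lt hq⟩ : ℕ) + 1))) * S π)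
    (x : Fin N → ℤ) :
    ∑ π : Equiv.Perm (Fin N), S π * ∏ j : Fin N, z ((π j : ℕ) + 1) ^ x j =
      S 1 * Matrix.det (Matrix.of fun m n : Fin N =>
        (∏ j ∈ range (n : ℕ), (1 - (v (j + 1) : ℂ) * z ((m : ℕ) + 1))⁻¹) *
        (∏ j ∈ range (m : ℕ), (1 - (v (j + 1) : ℂ) * z ((m : ℕ) + 1))) *
        z ((m : ℕ) + 1) ^ x n) := by
  set c : ℕ → ℕ → ℂ := fun j m => 1 - (v (j + 1) : ℂ) * z (m + 1)
  have hc : ∀ j m, c j m ≠ 0 := fun j m => hz (j + 1) (m + 1)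
  calc _ = S 1 * ∑ π, betheAmplitude c π * ∏ j, z ((π j : ℕ) + 1) ^ x j := by
        rw [mul_sum]
        exact sum_congr rfl fun π _ => by rw [eq_mul_betheAmplitude hc S hS π, mul_assoc]
    _ = _ := congrArg (S 1 * ·)
        (sum_betheAmplitude_mul_prod_eq_det c fun m n => z ((m : ℕ) + 1) ^ x n)

/-- Bethe ansatz determinant identity: if the amplitudes `S_π` satisfy the exchange
relation `S_{T_k π} = -((1 - v_k z_{π(k+1)})/(1 - v_k z_{π(k)})) S_π`, then the Bethe
sum over permutations equals `S_id` times the determinant.  Here everything is written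
0-based: position `q` (0-based) corresponds to paper position `k = q+1`, and the rate
and momentum with 1-based paper index `j` are `v j` and `z j`. -/
theorem bethe_determinant (N : ℕ) (v : ℕ → ℝ) (hv : ∀ i, 0 < v i)
    (z : ℕ → ℂ) (hz0 : ∀ m, z m ≠ 0) (hz : ∀ j m, 1 - (v j : ℂ) * z m ≠ 0)
    (S : Equiv.Perm (Fin N) → ℂ)
    (hS : ∀ (π : Equiv.Perm (Fin N)) (q : ℕ) (hq : q + 1 < N),
      S (π * Equiv.swap ⟨q, Nat.lt_of_succ_lt hq⟩ ⟨q + 1, hq⟩) =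
        -((1 - (v (q + 1) : ℂ) * z ((π ⟨q + 1, hq⟩ : ℕ) + 1)) /
          (1 - (v (q + 1) : ℂ) * z ((π ⟨q, Nat.lt_of_succ_lt hq⟩ : ℕ) + 1))) * S π)
    (x : Fin N → ℤ) :
    ∑ π : Equiv.Perm (Fin N), S π * ∏ j : Fin N, z ((π j : ℕ) + 1) ^ x j =
      S 1 * Matrix.det (Matrix.of fun m n : Fin N =>
        (∏ j ∈ range (n : ℕ), (1 - (v (j + 1) : ℂ) * z ((m : ℕ) + 1))⁻¹) *
        (∏ j ∈ range (m : ℕ), (1 - (v (j + 1) : ℂ) * z ((m : ℕ) + 1))) *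
        z ((m : ℕ) + 1) ^ x n) :=
  bethe_determinant_general N v z hz S hS x
end

section
/- Define $P_{\mathbf{k}}(x_1,\dots,x_N)=\prod_{i=1}^N v_i^{x_i}\det\big[\prod_{j=1}^{n-1}(1-v_jz_m)^{-1}\prod_{j=1}^{m-1}(1-v_jz_m)\,z_m^{x_n}\big]_{m,n}$ where $z_m=e^{ik_m}$. Then $P_{\mathbf{k}}$ is an eigenfunction of the free evolution operator: $\sum_{i=1}^N v_i\,P_{\mathbf{k}}(x_1,\dots,x_i-1,\dots,x_N)-\big(\sum_{i=1}^N v_i\big)P_{\mathbf{k}}(x_1,\dots,x_N) = -E_{\mathbf{k}}\,P_{\mathbf{k}}(x_1,\dots,x_N)$ with eigenvalue $E_{\mathbf{k}}=\sum_{j=1}^N(v_j-z_j^{-1})$, for all $(x_1,\dots,x_N)\in\mathbb{Z}^N$. -/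
/-!
Lowering `x i` by one divides the weight `∏ v^x` by `v i` and multiplies column `i` of the
Bethe matrix by `z_m⁻¹` in row `m`. Scaling row `m` of a single column by `d m` and summing over
the columns multiplies the determinant by `∑ d m` (expand each determinant along the scaled column
and use `A * adjugate A = det A • 1`), so the left-hand side is `(∑ z_m⁻¹ - ∑ v_i) Pk`.
-/

open Finset

/-- The Bethe determinant eigenfunction
`P_k(x) = ∏ v_i^{x_i} · det[ ∏_{j<n}(1-v_j z_m)⁻¹ ∏_{j<m}(1-v_j z_m) z_m^{x_n} ]`,
written 0-based in `m,n`; rates/momenta with 1-based paper index `j` are `v j`, `z j`. -/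
noncomputable def Pk (N : ℕ) (v : ℕ → ℝ) (z : ℕ → ℂ) (x : Fin N → ℤ) : ℂ :=
  (∏ i : Fin N, ((v ((i : ℕ) + 1) : ℂ)) ^ x i) *
    Matrix.det (Matrix.of fun m n : Fin N =>
      (∏ j ∈ range (n : ℕ), (1 - (v (j + 1) : ℂ) * z ((m : ℕ) + 1))⁻¹) *
      (∏ j ∈ range (m : ℕ), (1 - (v (j + 1) : ℂ) * z ((m : ℕ) + 1))) *
      z ((m : ℕ) + 1) ^ x n)

theorem Matrix.sum_det_updateCol_mul {n R : Type*} [Fintype n] [DecidableEq n] [CommRing R]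
    (A : Matrix n n R) (d : n → R) :
    ∑ j, (A.updateCol j fun i => d i * A i j).det = (∑ i, d i) * A.det := by
  calc ∑ j, (A.updateCol j fun i => d i * A i j).det
      = ∑ j, ∑ i, d i * (A i j * A.adjugate j i) := by
        simp only [← cramer_apply, cramer_eq_adjugate_mulVec, mulVec, dotProduct]
        refine sum_congr rfl fun j _ => sum_congr rfl fun i _ => by ring
    _ = ∑ i, d i * (A * A.adjugate) i i := by
        rw [sum_comm]; simp only [mul_apply, mul_sum]
    _ = (∑ i, d i) * A.det := by
        simp [mul_adjugate, sum_mul]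

theorem Finset.prod_zpow_update_sub_one {ι K : Type*} [Fintype ι] [DecidableEq ι]
    [CommGroupWithZero K] (f : ι → K) (x : ι → ℤ) {i : ι} (hi : f i ≠ 0) :
    ∏ j, f j ^ Function.update x i (x i - 1) j = (f i)⁻¹ * ∏ j, f j ^ x j := by
  have hupdate : (fun j => f j ^ Function.update x i (x i - 1) j) =
      Function.update (fun j => f j ^ x j) i (f i ^ (x i - 1)) :=
    funext <| Function.apply_update (fun j => (f j ^ ·)) x i (x i - 1)
  rw [hupdate, prod_update_of_mem (mem_univ i),
    prod_eq_mul_prod_sdiff_singleton_of_mem (mem_univ i), zpow_sub_one₀ hi]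
  field_simp

noncomputable def betheMatrix (N : ℕ) (v : ℕ → ℝ) (z : ℕ → ℂ) (x : Fin N → ℤ) :
    Matrix (Fin N) (Fin N) ℂ :=
  Matrix.of fun m n : Fin N =>
    (∏ j ∈ range (n : ℕ), (1 - (v (j + 1) : ℂ) * z ((m : ℕ) + 1))⁻¹) *
    (∏ j ∈ range (m : ℕ), (1 - (v (j + 1) : ℂ) * z ((m : ℕ) + 1))) *
    z ((m : ℕ) + 1) ^ x n

theorem betheMatrix_update_sub_one (N : ℕ) (v : ℕ → ℝ) {z : ℕ → ℂ} (hz0 : ∀ m, z m ≠ 0)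
    (x : Fin N → ℤ) (i : Fin N) :
    betheMatrix N v z (Function.update x i (x i - 1)) =
      (betheMatrix N v z x).updateCol i
        fun m => (z ((m : ℕ) + 1))⁻¹ * betheMatrix N v z x m i := by
  ext m n
  rcases eq_or_ne n i with rfl | hni
  · simp only [betheMatrix, Matrix.updateCol_self, Matrix.of_apply, Function.update_self,
      zpow_sub_one₀ (hz0 _)]
    ring
  · simp [betheMatrix, Matrix.updateCol_ne hni, Function.update_of_ne hni]

theorem bethe_eigenfunction_general (N : ℕ) (v : ℕ → ℝ) (hv : ∀ i, 0 < v i)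
    (z : ℕ → ℂ) (hz0 : ∀ m, z m ≠ 0)
    (x : Fin N → ℤ) :
    ∑ i : Fin N, (v ((i : ℕ) + 1) : ℂ) * Pk N v z (Function.update x i (x i - 1)) -
      (∑ i : Fin N, (v ((i : ℕ) + 1) : ℂ)) * Pk N v z x =
    -(∑ j : Fin N, ((v ((j : ℕ) + 1) : ℂ) - (z ((j : ℕ) + 1))⁻¹)) * Pk N v z x := by
  have hPk : ∀ y, Pk N v z y = (∏ i : Fin N, (v ((i : ℕ) + 1) : ℂ) ^ y i) *
      (betheMatrix N v z y).det := fun _ => rfl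
  have hshift : ∀ i : Fin N, (v ((i : ℕ) + 1) : ℂ) * Pk N v z (Function.update x i (x i - 1)) =
      (∏ j : Fin N, (v ((j : ℕ) + 1) : ℂ) ^ x j) * ((betheMatrix N v z x).updateCol i
        fun m => (z ((m : ℕ) + 1))⁻¹ * betheMatrix N v z x m i).det := by
    intro i
    have hvi : (v ((i : ℕ) + 1) : ℂ) ≠ 0 := Complex.ofReal_ne_zero.mpr (hv _).ne'
    rw [hPk, prod_zpow_update_sub_one (fun j : Fin N => (v ((j : ℕ) + 1) : ℂ)) x hvi,
      betheMatrix_update_sub_one N v hz0]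
    field_simp
  rw [sum_congr rfl fun i _ => hshift i, ← mul_sum, Matrix.sum_det_updateCol_mul, hPk,
    sum_sub_distrib]
  ring

theorem bethe_eigenfunction (N : ℕ) (v : ℕ → ℝ) (hv : ∀ i, 0 < v i)
    (z : ℕ → ℂ) (hz0 : ∀ m, z m ≠ 0) (hz : ∀ j m, 1 - (v j : ℂ) * z m ≠ 0)
    (x : Fin N → ℤ) :
    ∑ i : Fin N, (v ((i : ℕ) + 1) : ℂ) * Pk N v z (Function.update x i (x i - 1)) -
      (∑ i : Fin N, (v ((i : ℕ) + 1) : ℂ)) * Pk N v z x =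
    -(∑ j : Fin N, ((v ((j : ℕ) + 1) : ℂ) - (z ((j : ℕ) + 1))⁻¹)) * Pk N v z x :=
  bethe_eigenfunction_general N v hv z hz0 x
end

section
/- Let $P(\mathbf{x}|\mathbf{y};t)=\prod_{i=1}^N e^{-tv_i}v_i^{x_i-y_i}\det\big[F_{m,n}(x_n-y_m,t)\big]_{1\le m,n\le N}$ with $F_{k,l}$ the contour-integral functions. Then $P$ satisfies the free evolution equation $\frac{d}{dt}P(\mathbf{x}|\mathbf{y};t)=\sum_{i=1}^N v_i\,P(x_1,\dots,x_i-1,\dots,x_N|\mathbf{y};t)-\big(\sum_i v_i\big)P(\mathbf{x}|\mathbf{y};t)$ for all $\mathbf{x},\mathbf{y}\in\mathbb{Z}^N$ and $t>0$. -/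
open Finset

/-- The determinant formula for the conditional probability:
`P(x|y;t) = ∏_i e^{-t v_i} v_i^{x_i - y_i} · det[F_{m,n}(x_n - y_m, t)]`,
written 0-based in `m,n` (particle `i` (0-based) has rate `v (i+1)`). -/
noncomputable def Pc (N : ℕ) (v : ℕ → ℝ) (ε : ℝ) (y x : Fin N → ℤ) (t : ℝ) : ℂ :=
  (∏ i : Fin N,
      Complex.exp (-(t * v ((i : ℕ) + 1) : ℝ)) * (v ((i : ℕ) + 1) : ℂ) ^ (x i - y i)) *
    Matrix.det (Matrix.of fun m n : Fin N =>
      F v ε ((m : ℕ) + 1) ((n : ℕ) + 1) (x n - y m) t)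

/-!
Since `∂ₜ e^{t/z} = e^{t/z} / z`, differentiating under the contour integral lowers the power
of `z` by one: `∂ₜ F_{k,l}(x, t) = F_{k,l}(x - 1, t)`. Write `P` as the prefactor
`∏ e^{-t vᵢ} vᵢ^{xᵢ - yᵢ}` times the determinant. The prefactor contributes `-(∑ vᵢ) P`. By
multilinearity, the derivative of the determinant is the sum over the columns `n` of the
determinant whose column `n` is shifted to `xₙ - 1`; multiplying by `vₙ` turns the prefactor into
the one for `x - eₙ`, so that term is `vₙ P(x - eₙ)`.
-/

open Metric

theorem norm_cexp_ofReal_div_le (s : ℝ) (z : ℂ) :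
    ‖Complex.exp (s / z)‖ ≤ Real.exp (|s| / ‖z‖) := by
  rw [Complex.norm_exp]
  gcongr
  simpa [norm_div] using Complex.re_le_norm ((s : ℂ) / z)

theorem hasDerivAt_circleIntegral_cexp_div_mul {R : ℝ} (hR : 0 < R) {g : ℂ → ℂ}
    (hg : ContinuousOn g (sphere (0 : ℂ) R)) (t : ℝ) :
    HasDerivAt (fun s : ℝ => ∮ z in C(0, R), Complex.exp (s / z) * g z)
      (∮ z in C(0, R), Complex.exp (t / z) * g z / z) t := by
  obtain ⟨C, hC⟩ := (isCompact_sphere (0 : ℂ) R).exists_bound_of_continuousOn hg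
  set w := circleMap 0 R
  have hw : ∀ θ, w θ ≠ 0 := fun θ => circleMap_ne_center hR.ne'
  have hnorm : ∀ θ, ‖w θ‖ = R := fun θ => by simp [w, abs_of_pos hR]
  have hgw : Continuous fun θ => g (w θ) :=
    hg.comp_continuous (continuous_circleMap 0 R) (circleMap_mem_sphere 0 hR.le)
  have hdw : Continuous (deriv w) := (contDiff_circleMap 0 R (n := 1)).continuous_deriv le_rfl
  have hcont : ∀ s : ℝ, Continuous fun θ => Complex.exp (s / w θ) * g (w θ) := fun s =>
    (Complex.continuous_exp.comp (continuous_const.div (continuous_circleMap 0 R) hw)).mul hgw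
  have hderiv : ∀ θ (s : ℝ),
      HasDerivAt (fun s : ℝ => deriv w θ • (Complex.exp (s / w θ) * g (w θ)))
        (deriv w θ • (Complex.exp (s / w θ) * g (w θ) / w θ)) s := by
    intro θ s
    have h := (((hasDerivAt_id (s : ℂ)).div_const (w θ)).cexp.comp_ofReal.mul_const
      (g (w θ))).const_mul (deriv w θ)
    simp only [smul_eq_mul, id] at h ⊢
    exact h.congr_deriv (by ring)
  simp only [circleIntegral]
  refine (intervalIntegral.hasDerivAt_integral_of_dominated_loc_of_deriv_le
    (bound := fun _ => Real.exp ((|t| + 1) / R) * C) (ball_mem_nhds t one_pos)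
    (.of_forall fun s => (hdw.smul (hcont s)).aestronglyMeasurable)
    ((hdw.smul (hcont t)).intervalIntegrable _ _)
    (hdw.smul ((hcont t).div (continuous_circleMap 0 R) hw)).aestronglyMeasurable ?_
    intervalIntegrable_const (.of_forall fun θ _ s _ => hderiv θ s)).2
  refine .of_forall fun θ _ s hs => ?_
  have hs' : |s| ≤ |t| + 1 := by
    have := abs_sub_abs_le_abs_sub s t
    rw [mem_ball, Real.dist_eq] at hs
    linarith
  calc ‖deriv w θ • (Complex.exp (s / w θ) * g (w θ) / w θ)‖
      = ‖Complex.exp (s / w θ)‖ * ‖g (w θ)‖ := by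
        have hw' := norm_ne_zero_iff.2 (hw θ)
        rw [show deriv w θ = w θ * Complex.I from deriv_circleMap 0 R θ]
        simp only [norm_smul, norm_mul, norm_div, Complex.norm_I]
        field_simp
    _ ≤ Real.exp ((|t| + 1) / R) * C := by
        gcongr
        · exact (norm_cexp_ofReal_div_le s _).trans (by rw [hnorm]; gcongr)
        · exact hC _ (circleMap_mem_sphere 0 hR.le θ)

theorem hasDerivAt_F {v : ℕ → ℝ} {ε : ℝ} (hε : 0 < ε) (hvε : ∀ i, |v i| * ε < 1)
    (k l : ℕ) (x : ℤ) (t : ℝ) :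
    HasDerivAt (F v ε k l x ·) (F v ε k l (x - 1) t) t := by
  have hz : ∀ z ∈ sphere (0 : ℂ) ε, z ≠ 0 := fun z hz => ne_of_mem_sphere hz hε.ne'
  have hfactor : ∀ i, ∀ z ∈ sphere (0 : ℂ) ε, 1 - (v i : ℂ) * z ≠ 0 := by
    intro i z hz h
    have : ‖(v i : ℂ) * z‖ < 1 := by simpa [mem_sphere_zero_iff_norm.1 hz] using hvε i
    simp [← eq_of_sub_eq_zero h] at this
  set g : ℂ → ℂ := fun z => z ^ (x - 1) * (∏ i ∈ range (l - 1), (1 - (v (i + 1) : ℂ) * z)⁻¹) *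
      ∏ i ∈ range (k - 1), (1 - (v (i + 1) : ℂ) * z)
  have hg : ContinuousOn g (sphere 0 ε) := by
    refine ContinuousOn.mul (.mul ?_ ?_) (by fun_prop)
    · exact fun z hzs => (continuousAt_zpow₀ z _ (.inl (hz z hzs))).continuousWithinAt
    · exact continuousOn_finsetProd _ fun i _ =>
        (by fun_prop : ContinuousOn (fun z : ℂ => 1 - (v (i + 1) : ℂ) * z) _).inv₀ (hfactor _)
  have hF : (F v ε k l x ·) = fun s : ℝ =>
      (2 * Real.pi * Complex.I)⁻¹ * ∮ z in C(0, ε), Complex.exp (s / z) * g z := by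
    funext s
    simp only [F, g, mul_assoc]
  rw [hF]
  refine ((hasDerivAt_circleIntegral_cexp_div_mul hε hg t).const_mul _).congr_deriv ?_
  simp only [F]
  congr 1
  refine circleIntegral.integral_congr hε.le fun z hz' => ?_
  simp only [g, zpow_sub_one₀ (hz z hz')]
  ring

theorem Matrix.hasDerivAt_det {𝕜 𝔸 n : Type*} [NontriviallyNormedField 𝕜] [NormedCommRing 𝔸]
    [NormedAlgebra 𝕜 𝔸] [Fintype n] [DecidableEq n] {A : 𝕜 → Matrix n n 𝔸} {A' : Matrix n n 𝔸}
    {t : 𝕜} (h : ∀ i j, HasDerivAt (fun s => A s i j) (A' i j) t) :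
    HasDerivAt (fun s => (A s).det) (∑ j, ((A t).updateCol j fun i => A' i j).det) t := by
  simp only [Matrix.det_apply']
  refine (HasDerivAt.fun_sum fun σ _ =>
    (HasDerivAt.fun_finsetProd fun i _ => h (σ i) i).const_mul _).congr_deriv ?_
  simp only [smul_eq_mul, mul_sum]
  rw [sum_comm]
  refine sum_congr rfl fun j _ => sum_congr rfl fun σ _ => ?_
  rw [← mul_prod_erase univ _ (mem_univ j), Matrix.updateCol_self,
    prod_congr rfl fun i hi => Matrix.updateCol_ne (ne_of_mem_erase hi)]
  ring

theorem mul_prod_apply_update {ι α M : Type*} [Fintype ι] [DecidableEq ι] [CommMonoid M]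
    (f : ι → α → M) (x : ι → α) (n : ι) (a : α) {c : M} (h : c * f n a = f n (x n)) :
    c * ∏ i, f i (Function.update x n a i) = ∏ i, f i (x i) := by
  simp_rw [Function.apply_update f x n a]
  rw [prod_update_of_mem (mem_univ n), ← mul_assoc, h, ← compl_eq_univ_sdiff]
  exact (Fintype.prod_eq_mul_prod_compl n fun k => f k (x k)).symm

theorem hasDerivAt_prod_cexp_neg_mul {ι : Type*} [Fintype ι] (a : ι → ℝ) (b : ι → ℂ) (t : ℝ) :
    HasDerivAt (fun s : ℝ => ∏ i, Complex.exp (-(s * a i : ℝ)) * b i)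
      (-(∑ i, (a i : ℂ)) * ∏ i, Complex.exp (-(t * a i : ℝ)) * b i) t := by
  have hexp : ∀ s : ℝ, ∏ i, Complex.exp (-(s * a i : ℝ)) * b i =
      Complex.exp (-(s * ∑ i, (a i : ℂ))) * ∏ i, b i := fun s => by
    rw [prod_mul_distrib, ← Complex.exp_sum, mul_sum, ← sum_neg_distrib]
    push_cast
    rfl
  simp only [hexp]
  refine ((((hasDerivAt_id (t : ℂ)).mul_const _).neg.cexp.comp_ofReal).mul_const _).congr_deriv ?_
  simp only [id, Pi.neg_apply]
  ring

section MasterEquation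

variable (N : ℕ) (v : ℕ → ℝ) (ε : ℝ) (y x : Fin N → ℤ) (t : ℝ)

noncomputable def prefactor : ℂ :=
  ∏ i : Fin N, Complex.exp (-(t * v ((i : ℕ) + 1) : ℝ)) * (v ((i : ℕ) + 1) : ℂ) ^ (x i - y i)

noncomputable def Fmatrix : Matrix (Fin N) (Fin N) ℂ :=
  Matrix.of fun m n => F v ε ((m : ℕ) + 1) ((n : ℕ) + 1) (x n - y m) t

theorem Pc_eq_prefactor_mul_det :
    Pc N v ε y x t = prefactor N v y x t * (Fmatrix N v ε y x t).det :=
  rfl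

theorem hasDerivAt_prefactor :
    HasDerivAt (prefactor N v y x ·)
      (-(∑ i : Fin N, (v ((i : ℕ) + 1) : ℂ)) * prefactor N v y x t) t :=
  hasDerivAt_prod_cexp_neg_mul _ _ t

theorem mul_prefactor_update_sub_one {n : Fin N} (hv : v ((n : ℕ) + 1) ≠ 0) :
    (v ((n : ℕ) + 1) : ℂ) * prefactor N v y (Function.update x n (x n - 1)) t =
      prefactor N v y x t := by
  refine mul_prod_apply_update (fun (i : Fin N) (k : ℤ) =>
    Complex.exp (-(t * v ((i : ℕ) + 1) : ℝ)) * (v ((i : ℕ) + 1) : ℂ) ^ (k - y i)) x n _ ?_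
  have hv' : (v ((n : ℕ) + 1) : ℂ) ≠ 0 := by exact_mod_cast hv
  rw [sub_right_comm, zpow_sub_one₀ hv']
  field_simp

theorem Fmatrix_update_sub_one (n : Fin N) :
    Fmatrix N v ε y (Function.update x n (x n - 1)) t =
      (Fmatrix N v ε y x t).updateCol n
        fun m => F v ε ((m : ℕ) + 1) ((n : ℕ) + 1) (x n - y m - 1) t := by
  ext m j
  rcases eq_or_ne j n with rfl | hj
  · simp [Fmatrix, sub_right_comm]
  · simp [Fmatrix, hj]

variable {N v ε y x t}

theorem hasDerivAt_det_Fmatrix (hε : 0 < ε) (hvε : ∀ i, |v i| * ε < 1) :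
    HasDerivAt (fun s => (Fmatrix N v ε y x s).det)
      (∑ n, (Fmatrix N v ε y (Function.update x n (x n - 1)) t).det) t := by
  simp only [Fmatrix_update_sub_one]
  exact Matrix.hasDerivAt_det fun m n => hasDerivAt_F hε hvε _ _ _ t

end MasterEquation

theorem master_equation_general
    (N : ℕ) (v : ℕ → ℝ) (vmax : ℝ) (hv : ∀ i, 0 < v i) (hvm : ∀ i, v i ≤ vmax)
    (ε : ℝ) (hε : 0 < ε) (hεm : ε < 1 / vmax)
    (y x : Fin N → ℤ) (t : ℝ) :
    HasDerivAt (fun s : ℝ => Pc N v ε y x s)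
      (∑ i : Fin N, (v ((i : ℕ) + 1) : ℂ) * Pc N v ε y (Function.update x i (x i - 1)) t -
        (∑ i : Fin N, (v ((i : ℕ) + 1) : ℂ)) * Pc N v ε y x t) t := by
  have hvε : ∀ i, |v i| * ε < 1 := fun i => by
    have hvmax : 0 < vmax := (hv 0).trans_le (hvm 0)
    rw [abs_of_pos (hv i)]
    calc v i * ε ≤ vmax * ε := by gcongr; exact hvm i
      _ < 1 := by rwa [lt_div_iff₀ hvmax, mul_comm] at hεm
  have hshift : ∀ n : Fin N,
      (v ((n : ℕ) + 1) : ℂ) * Pc N v ε y (Function.update x n (x n - 1)) t =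
        prefactor N v y x t * (Fmatrix N v ε y (Function.update x n (x n - 1)) t).det := fun n => by
    rw [Pc_eq_prefactor_mul_det, ← mul_assoc, mul_prefactor_update_sub_one _ _ _ _ _ (hv _).ne']
  refine ((hasDerivAt_prefactor N v y x t).mul (hasDerivAt_det_Fmatrix hε hvε)).congr_deriv ?_
  rw [sum_congr rfl fun n _ => hshift n, ← mul_sum, Pc_eq_prefactor_mul_det]
  ring

theorem master_equation
    (N : ℕ) (v : ℕ → ℝ) (vmax : ℝ) (hv : ∀ i, 0 < v i) (hvm : ∀ i, v i ≤ vmax)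
    (ε : ℝ) (hε : 0 < ε) (hεm : ε < 1 / vmax)
    (y x : Fin N → ℤ) (t : ℝ) (ht : 0 < t) :
    HasDerivAt (fun s : ℝ => Pc N v ε y x s)
      (∑ i : Fin N, (v ((i : ℕ) + 1) : ℂ) * Pc N v ε y (Function.update x i (x i - 1)) t -
        (∑ i : Fin N, (v ((i : ℕ) + 1) : ℂ)) * Pc N v ε y x t) t :=
  master_equation_general N v vmax hv hvm ε hε hεm y x t
end

section
/- Initial condition for two particles: for $N=2$, rates $v_1,v_2\in(0,v_{\max}]$, and initial positions $y_1<y_2$, the determinant formula evaluated at $t=0$ reproduces the Kronecker delta on the physical domain: for all $x_1<x_2$, $\prod_{i=1,2} v_i^{x_i-y_i}\cdot\det\begin{pmatrix}F_{1,1}(x_1-y_1,0)&F_{1,2}(x_2-y_1,0)\\F_{2,1}(x_1-y_2,0)&F_{2,2}(x_2-y_2,0)\end{pmatrix}=\delta_{x_1,y_1}\delta_{x_2,y_2}$. -/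
/-!
At `t = 0` the exponential disappears and `F_{k,l}(x,0)` is the coefficient of `z^{-x}` of a
rational function, read off by `(2πi)⁻¹ ∮ z^{n-1} = δ_{n,0}`. On the diagonal the two products
cancel, so `F_{k,k}(x,0) = δ_{x,0}`. The cross term of the determinant vanishes: `F_{2,1}(x,0)`
is supported on `x ∈ {0, -1}`, and if `x₁ - y₂ ≥ -1` then `x₂ - y₁ ≥ 1`, where `F_{1,2}(x,0) = 0`
by Cauchy's theorem, because `ε < 1 / v₁` keeps the pole of `(1 - v₁z)⁻¹` outside the contour.
-/

open Finset

open Complex Metric Real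

theorem circleIntegral_zpow_sub_one {R : ℝ} (hR : 0 < R) (x : ℤ) :
    (2 * π * I)⁻¹ * (∮ z in C(0, R), z ^ (x - 1)) = if x = 0 then 1 else 0 := by
  split_ifs with hx
  · have h2πI : ∮ z in C(0, R), z⁻¹ = 2 * π * I := by
      simpa using circleIntegral.integral_sub_inv_of_mem_ball (mem_ball_self (x := (0 : ℂ)) hR)
    simp only [hx, zero_sub, zpow_neg_one, h2πI]
    exact inv_mul_cancel₀ (by simp [pi_ne_zero])
  · simpa using circleIntegral.integral_sub_zpow_of_ne (show x - 1 ≠ -1 by omega) 0 0 R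

theorem circleIntegrable_const_mul_zpow {R : ℝ} (hR : 0 < R) (a : ℂ) (n : ℤ) :
    CircleIntegrable (fun z : ℂ => a * z ^ n) 0 R :=
  ContinuousOn.circleIntegrable hR.le fun z hz => (continuousAt_const.mul
    (continuousAt_zpow₀ _ _ (Or.inl (ne_zero_of_mem_sphere hR.ne' ⟨z, hz⟩)))).continuousWithinAt

theorem one_sub_ofReal_mul_ne_zero {a ε : ℝ} (h : |a| * ε < 1) {z : ℂ} (hz : ‖z‖ ≤ ε) :
    (1 : ℂ) - a * z ≠ 0 := by
  refine sub_ne_zero.mpr fun h1 => ?_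
  have : ‖(a : ℂ) * z‖ < 1 := by
    rw [norm_mul, norm_real, Real.norm_eq_abs]
    exact (mul_le_mul_of_nonneg_left hz (abs_nonneg a)).trans_lt h
  rw [← h1, norm_one] at this
  exact this.false

section

variable (v : ℕ → ℝ) {ε : ℝ}

theorem F_zero_time (k l : ℕ) (x : ℤ) :
    F v ε k l x 0 = (2 * π * I)⁻¹ * ∮ z in C(0, ε), z ^ (x - 1) *
      (∏ i ∈ range (l - 1), (1 - (v (i + 1) : ℂ) * z)⁻¹) *
      ∏ i ∈ range (k - 1), (1 - (v (i + 1) : ℂ) * z) := by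
  simp [F]

theorem F_self_zero_time (hε : 0 < ε) (hvε : ∀ i, |v i| * ε < 1) (k : ℕ) (x : ℤ) :
    F v ε k k x 0 = if x = 0 then 1 else 0 := by
  rw [F_zero_time, ← circleIntegral_zpow_sub_one hε]
  congr 1
  refine circleIntegral.integral_congr hε.le fun z hz => ?_
  have hne : ∏ i ∈ range (k - 1), (1 - (v (i + 1) : ℂ) * z) ≠ 0 :=
    prod_ne_zero_iff.mpr fun i _ => one_sub_ofReal_mul_ne_zero (hvε _) (by simp_all)
  simp only [prod_inv_distrib, mul_assoc, inv_mul_cancel₀ hne, mul_one]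

theorem F_zero_time_eq_zero_of_pos (hε : 0 < ε) (hvε : ∀ i, |v i| * ε < 1) (k l : ℕ)
    {x : ℤ} (hx : 0 < x) : F v ε k l x 0 = 0 := by
  have hpole : ∀ i, ∀ z ∈ closedBall (0 : ℂ) ε, (1 : ℂ) - v i * z ≠ 0 := fun i z hz =>
    one_sub_ofReal_mul_ne_zero (hvε i) (by simpa using hz)
  have hdiff : DifferentiableOn ℂ (fun z : ℂ => z ^ (x - 1) *
      (∏ i ∈ range (l - 1), (1 - (v (i + 1) : ℂ) * z)⁻¹) *
      ∏ i ∈ range (k - 1), (1 - (v (i + 1) : ℂ) * z)) (closedBall 0 ε) := by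
    refine DifferentiableOn.mul (DifferentiableOn.mul (fun z _ => ?_) ?_) ?_
    · exact (differentiableAt_zpow.mpr (Or.inr (by omega))).differentiableWithinAt
    · exact DifferentiableOn.fun_finsetProd fun i _ =>
        DifferentiableOn.inv (by fun_prop) (hpole (i + 1))
    · exact DifferentiableOn.fun_finsetProd fun i _ => by fun_prop
  rw [F_zero_time, (hdiff.diffContOnCl_ball subset_rfl).circleIntegral_eq_zero hε.le, mul_zero]

theorem F_two_one_zero_time (hε : 0 < ε) (x : ℤ) :
    F v ε 2 1 x 0 = (if x = 0 then 1 else 0) - v 1 * if x + 1 = 0 then 1 else 0 := by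
  have hsplit : (∮ z in C(0, ε), z ^ (x - 1) *
      (∏ i ∈ range (1 - 1), (1 - (v (i + 1) : ℂ) * z)⁻¹) *
      ∏ i ∈ range (2 - 1), (1 - (v (i + 1) : ℂ) * z)) =
      (∮ z in C(0, ε), z ^ (x - 1)) - v 1 * ∮ z in C(0, ε), z ^ (x + 1 - 1) := by
    rw [← circleIntegral.integral_const_mul, ← circleIntegral.integral_sub
      (by simpa using circleIntegrable_const_mul_zpow hε 1 (x - 1))
      (circleIntegrable_const_mul_zpow hε _ _)]
    refine circleIntegral.integral_congr hε.le fun z hz => ?_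
    have hz0 : z ≠ 0 := ne_zero_of_mem_sphere hε.ne' ⟨z, hz⟩
    simp only [Nat.reduceSub, range_zero, prod_empty, range_one, prod_singleton, mul_one,
      add_sub_cancel_right, zpow_sub_one₀ hz0]
    field_simp
  rw [F_zero_time, hsplit, mul_sub, mul_left_comm, circleIntegral_zpow_sub_one hε,
    circleIntegral_zpow_sub_one hε]

end

theorem initial_condition_two_particles
    (v : ℕ → ℝ) (vmax : ℝ) (hv : ∀ i, 0 < v i) (hvm : ∀ i, v i ≤ vmax)
    (ε : ℝ) (hε : 0 < ε) (hεm : ε < 1 / vmax)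
    (y₁ y₂ : ℤ) (hy : y₁ < y₂) (x₁ x₂ : ℤ) (hx : x₁ < x₂) :
    (v 1 : ℂ) ^ (x₁ - y₁) * (v 2 : ℂ) ^ (x₂ - y₂) *
      Matrix.det !![F v ε 1 1 (x₁ - y₁) 0, F v ε 1 2 (x₂ - y₁) 0;
                    F v ε 2 1 (x₁ - y₂) 0, F v ε 2 2 (x₂ - y₂) 0] =
      if x₁ = y₁ ∧ x₂ = y₂ then 1 else 0 := by
  have hvmax : 0 < vmax := (hv 1).trans_le (hvm 1)
  have hvε : ∀ i, |v i| * ε < 1 := fun i => by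
    rw [abs_of_pos (hv i)]
    calc v i * ε ≤ vmax * ε := mul_le_mul_of_nonneg_right (hvm i) hε.le
      _ < 1 := by rwa [lt_div_iff₀ hvmax, mul_comm] at hεm
  have hcross : F v ε 1 2 (x₂ - y₁) 0 * F v ε 2 1 (x₁ - y₂) 0 = 0 := by
    by_cases hnear : x₁ - y₂ = 0 ∨ x₁ - y₂ + 1 = 0
    · rw [F_zero_time_eq_zero_of_pos v hε hvε 1 2 (by omega), zero_mul]
    · rw [F_two_one_zero_time v hε, if_neg (by tauto), if_neg (by tauto)]
      simp
  rw [Matrix.det_fin_two_of, hcross, sub_zero, F_self_zero_time v hε hvε,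
    F_self_zero_time v hε hvε]
  simp only [sub_eq_zero]
  split_ifs <;> simp_all
end

section
/- Equivalence of the two forms of the current distribution determinant: for any integer $x$, $t\ge0$, and rates $v_1,\dots,v_N>0$, the $N\times N$ determinant with entries $A_{m,n}=F_{m,n+1}(x+N-m+n-1,t)$ equals the determinant with entries $B_{m,n}=F_{1,n+1}(x+N-m+n-1,t)$, where $F_{k,l}$ are the contour-integral functions. -/
/-!
Expanding `∏_{i<m} (1 - v_{i+1} z) = Σ_j c_{m,j} z^j` inside the contour integral gives
`F_{m+1,l}(y) = Σ_{j ≤ m} c_{m,j} F_{1,l}(y + j)`. In the matrix `A` the shift `y ↦ y + j` is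
exactly the passage from row `m` to row `m - j`, so `A = L B` with `L` lower triangular with
diagonal entries `c_{m,0} = 1`, whence `det A = det B`.
-/

open Finset

open Polynomial Metric

theorem circleIntegral_mul_eval_eq_sum {f : ℂ → ℂ} {c : ℂ} {R : ℝ}
    (hf : ContinuousOn f (sphere c |R|)) (p : ℂ[X]) {n : ℕ} (hn : p.natDegree < n) :
    ∮ z in C(c, R), f z * p.eval z = ∑ j ∈ range n, p.coeff j * ∮ z in C(c, R), f z * z ^ j := by
  simp_rw [eval_eq_sum_range' hn, mul_sum, mul_left_comm (f _)]
  rw [circleIntegral.integral_fun_sum (f := fun j z => p.coeff j * (f z * z ^ j)) fun j _ =>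
    (continuousOn_const.mul (hf.mul (continuousOn_pow j))).circleIntegrable']
  simp only [circleIntegral.integral_const_mul]

theorem Matrix.det_of_sum_range_mul_rows {R : Type*} [CommRing R] {N : ℕ} (c : ℕ → ℕ → R)
    (hc : ∀ m, c m 0 = 1) (b : ℕ → Fin N → R) :
    (Matrix.of fun m n : Fin N => ∑ j ∈ range (m + 1), c m j * b (m - j) n).det =
      (Matrix.of fun m n : Fin N => b m n).det := by
  set L : Matrix (Fin N) (Fin N) R := .of fun m k => if k ≤ m then c m (m - k) else 0
  have hL : L.IsLowerTriangular := fun m k (h : m < k) => if_neg (not_le.mpr h)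
  have hA : (Matrix.of fun m n : Fin N => ∑ j ∈ range (m + 1), c m j * b (m - j) n) =
      L * .of fun m n => b m n := by
    ext m n
    rw [Matrix.mul_apply, Matrix.of_apply, ← sum_range_reflect]
    simp only [L, Matrix.of_apply, ite_mul, zero_mul, add_tsub_cancel_right, Fin.le_iff_val_le_val]
    rw [Fin.sum_univ_eq_sum_range (fun k => if k ≤ (m : ℕ) then c m (m - k) * b k n else 0),
      ← sum_filter]
    refine sum_congr ?_ fun k hk => by rw [Nat.sub_sub_self (mem_filter.mp hk).2]
    ext k
    simp only [mem_range, mem_filter]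
    omega
  rw [hA, Matrix.det_mul, Matrix.det_of_isLowerTriangular L hL]
  simp [L, hc]

noncomputable def ratePoly (v : ℕ → ℝ) (m : ℕ) : ℂ[X] :=
  ∏ i ∈ range m, (1 - C (v (i + 1) : ℂ) * X)

theorem eval_ratePoly (v : ℕ → ℝ) (m : ℕ) (z : ℂ) :
    (ratePoly v m).eval z = ∏ i ∈ range m, (1 - (v (i + 1) : ℂ) * z) := by
  simp [ratePoly, eval_prod]

theorem ratePoly_coeff_zero (v : ℕ → ℝ) (m : ℕ) : (ratePoly v m).coeff 0 = 1 := by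
  simp [coeff_zero_eq_eval_zero, eval_ratePoly]

theorem natDegree_ratePoly_le (v : ℕ → ℝ) (m : ℕ) : (ratePoly v m).natDegree ≤ m :=
  (natDegree_prod_le _ _).trans <| (sum_le_card_nsmul _ _ 1 fun _ _ => by compute_degree).trans
    (by simp)

noncomputable def baseIntegrand (v : ℕ → ℝ) (l : ℕ) (y : ℤ) (t : ℝ) (z : ℂ) : ℂ :=
  Complex.exp ((t : ℂ) / z) * z ^ (y - 1) * ∏ i ∈ range (l - 1), (1 - (v (i + 1) : ℂ) * z)⁻¹

theorem F_succ_eq_circleIntegral (v : ℕ → ℝ) (ε : ℝ) (m l : ℕ) (y : ℤ) (t : ℝ) :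
    F v ε (m + 1) l y t =
      (2 * Real.pi * Complex.I)⁻¹ *
        ∮ z in C(0, ε), baseIntegrand v l y t z * (ratePoly v m).eval z := by
  simp only [F, baseIntegrand, eval_ratePoly, add_tsub_cancel_right]

theorem baseIntegrand_mul_pow (v : ℕ → ℝ) (l : ℕ) (y : ℤ) (t : ℝ) {z : ℂ} (hz : z ≠ 0) (j : ℕ) :
    baseIntegrand v l y t z * z ^ j = baseIntegrand v l (y + j) t z := by
  simp only [baseIntegrand, add_sub_right_comm y, zpow_add₀ hz, zpow_natCast]
  ring

section

variable {v : ℕ → ℝ} {ε : ℝ} (hε : 0 < ε) (hvε : ∀ i, |v i| * ε < 1)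
include hε hvε

theorem continuousOn_baseIntegrand (l : ℕ) (y : ℤ) (t : ℝ) :
    ContinuousOn (baseIntegrand v l y t) (sphere 0 |ε|) := by
  have hz : ∀ z ∈ sphere (0 : ℂ) |ε|, z ≠ 0 := fun z hz =>
    norm_pos_iff.mp (by rw [mem_sphere_zero_iff_norm.mp hz]; positivity)
  have hv : ∀ i, ∀ z ∈ sphere (0 : ℂ) |ε|, 1 - (v i : ℂ) * z ≠ 0 := by
    intro i z hz h
    have : ‖(v i : ℂ) * z‖ = 1 := by rw [← sub_eq_zero.mp h, norm_one]
    rw [norm_mul, Complex.norm_real, mem_sphere_zero_iff_norm.mp hz, abs_of_pos hε] at this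
    exact (hvε i).ne this
  unfold baseIntegrand
  fun_prop (disch := first | exact hz | exact fun z hz' => Or.inl (hz z hz') | exact hv _)

theorem F_succ_eq_sum (m l : ℕ) (y : ℤ) (t : ℝ) :
    F v ε (m + 1) l y t = ∑ j ∈ range (m + 1), (ratePoly v m).coeff j * F v ε 1 l (y + j) t := by
  have hshift (j : ℕ) : ∮ z in C(0, ε), baseIntegrand v l y t z * z ^ j =
      ∮ z in C(0, ε), baseIntegrand v l (y + j) t z :=
    circleIntegral.integral_congr hε.le fun z hz =>
      baseIntegrand_mul_pow v l y t (ne_zero_of_mem_sphere hε.ne' ⟨z, hz⟩) j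
  rw [F_succ_eq_circleIntegral, circleIntegral_mul_eval_eq_sum
    (continuousOn_baseIntegrand hε hvε l y t) _ (Nat.lt_succ_of_le (natDegree_ratePoly_le v m)),
    mul_sum]
  refine sum_congr rfl fun j _ => ?_
  rw [F_succ_eq_circleIntegral, hshift]
  simp [ratePoly, mul_left_comm]

end

theorem determinant_form_A_eq_B_general
    (N : ℕ) (v : ℕ → ℝ) (vmax : ℝ) (hv : ∀ i, 0 < v i) (hvm : ∀ i, v i ≤ vmax)
    (ε : ℝ) (hε : 0 < ε) (hεm : ε < 1 / vmax)
    (x : ℤ) (t : ℝ) :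
    Matrix.det (Matrix.of fun m n : Fin N =>
        F v ε ((m : ℕ) + 1) ((n : ℕ) + 2) (x + N - (m : ℤ) + (n : ℤ) - 1) t) =
      Matrix.det (Matrix.of fun m n : Fin N =>
        F v ε 1 ((n : ℕ) + 2) (x + N - (m : ℤ) + (n : ℤ) - 1) t) := by
  have hvε (i : ℕ) : |v i| * ε < 1 := by
    have hvmax : 0 < vmax := (hv 0).trans_le (hvm 0)
    rw [abs_of_pos (hv i)]
    calc v i * ε ≤ vmax * ε := by gcongr; exact hvm i
      _ < 1 := by rwa [lt_div_iff₀ hvmax, mul_comm] at hεm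
  set b : ℕ → Fin N → ℂ := fun k n => F v ε 1 ((n : ℕ) + 2) (x + N - (k : ℤ) + (n : ℤ) - 1) t
  have hrow (m n : Fin N) :
      F v ε ((m : ℕ) + 1) ((n : ℕ) + 2) (x + N - (m : ℤ) + (n : ℤ) - 1) t =
        ∑ j ∈ range ((m : ℕ) + 1), (ratePoly v m).coeff j * b (m - j) n := by
    rw [F_succ_eq_sum hε hvε]
    refine sum_congr rfl fun j hj => ?_
    simp only [b, Nat.cast_sub (Nat.lt_succ_iff.mp (mem_range.mp hj))]
    congr 2
    ring
  simp_rw [hrow]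
  exact Matrix.det_of_sum_range_mul_rows _ (ratePoly_coeff_zero v) b

theorem determinant_form_A_eq_B
    (N : ℕ) (v : ℕ → ℝ) (vmax : ℝ) (hv : ∀ i, 0 < v i) (hvm : ∀ i, v i ≤ vmax)
    (ε : ℝ) (hε : 0 < ε) (hεm : ε < 1 / vmax)
    (x : ℤ) (t : ℝ) (ht : 0 ≤ t) :
    Matrix.det (Matrix.of fun m n : Fin N =>
        F v ε ((m : ℕ) + 1) ((n : ℕ) + 2) (x + N - (m : ℤ) + (n : ℤ) - 1) t) =
      Matrix.det (Matrix.of fun m n : Fin N =>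
        F v ε 1 ((n : ℕ) + 2) (x + N - (m : ℤ) + (n : ℤ) - 1) t) :=
  determinant_form_A_eq_B_general N v vmax hv hvm ε hε hεm x t
end
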